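/- arXiv:1201.3600 — 2 statements merged into one kernel-verified Lean document; each statement's English description precedes it below -/
import Mathlib

section
/- (Proposition 3.1, pointwise form) Let (W, S, Rad, L, S') be a Radical transversal datum with respect to g̃. Then the screen transversal space S' is J-invariant: J(S') = S'. -/
/-!
Write `g̃ = g ∘ J`. It is symmetric, and `J` preserves `g̃`-orthogonality since
`g̃(Jx, Jy) = -g̃(x, y)`. The space `U = S ⊕ Rad ⊕ L` is `J`-invariant (`J` swaps `Rad`
and `L` and fixes `S`), and `g̃` is nondegenerate on it: testing against `L`, then `Rad`, then `S`
kills the three components of a vector of `U ∩ U^{⊥g̃}` one after the other. For `x ∈ S'`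
we have `x ⊥ U`, hence `Jx ⊥ JU = U`; writing `Jx = u + s'` with `u ∈ U`, `s' ∈ S'`, also
`u = Jx - s' ⊥ U`, so `u = 0` and `Jx ∈ S'`.
-/

/-- For a bilinear form `h` on `V` and a subspace `W`, the `h`-orthogonal space
`W^{⊥h} = {v ∈ V : h(v, w) = 0 for all w ∈ W}`. -/
def perpBilin {V : Type*} [AddCommGroup V] [Module ℝ V]
    (h : V →ₗ[ℝ] V →ₗ[ℝ] ℝ) (W : Submodule ℝ V) : Submodule ℝ V where
  carrier := {v | ∀ w ∈ W, h v w = 0}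
  add_mem' := by
    intro a b ha hb w hw
    simp [ha w hw, hb w hw]
  zero_mem' := by
    intro w hw
    simp
  smul_mem' := by
    intro c a ha w hw
    simp [ha w hw]

section Orthogonal

variable {V : Type*} [AddCommGroup V] [Module ℝ V] {B : V →ₗ[ℝ] V →ₗ[ℝ] ℝ}

theorem perpBilin_anti {U U' : Submodule ℝ V} (h : U ≤ U') :
    perpBilin B U' ≤ perpBilin B U :=
  fun _ hv w hw => hv w (h hw)

theorem perpBilin_sup (U U' : Submodule ℝ V) :
    perpBilin B (U ⊔ U') = perpBilin B U ⊓ perpBilin B U' := by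
  refine le_antisymm (le_inf (perpBilin_anti le_sup_left) (perpBilin_anti le_sup_right)) ?_
  rintro v ⟨hU, hU'⟩ w hw
  obtain ⟨a, ha, b, hb, rfl⟩ := Submodule.mem_sup.mp hw
  rw [map_add, hU a ha, hU' b hb, add_zero]

theorem map_perpBilin_le {J : V →ₗ[ℝ] V} (hJ : ∀ x y, B x y = 0 → B (J x) (J y) = 0)
    (U : Submodule ℝ V) : (perpBilin B U).map J ≤ perpBilin B (U.map J) := by
  rintro _ ⟨x, hx, rfl⟩ _ ⟨w, hw, rfl⟩
  exact hJ x w (hx w hw)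

theorem sup_inf_perpBilin_eq_bot (hB : ∀ x y, B x y = B y x) {S Rad L : Submodule ℝ V}
    (hSnd : S ⊓ perpBilin B S = ⊥) (hRad : Rad ≤ perpBilin B (S ⊔ Rad))
    (hLL : ∀ x ∈ L, ∀ y ∈ L, B x y = 0) (hLS : ∀ x ∈ L, ∀ y ∈ S, B x y = 0)
    (hpair1 : ∀ n ∈ L, (∀ ξ ∈ Rad, B n ξ = 0) → n = 0)
    (hpair2 : ∀ ξ ∈ Rad, (∀ n ∈ L, B n ξ = 0) → ξ = 0) :
    (S ⊔ Rad ⊔ L) ⊓ perpBilin B (S ⊔ Rad ⊔ L) = ⊥ := by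
  rw [eq_bot_iff]
  rintro y ⟨hy, hperp⟩
  obtain ⟨sξ, hsξ, n, hn, rfl⟩ := Submodule.mem_sup.mp hy
  obtain ⟨s, hs, ξ, hξ, rfl⟩ := Submodule.mem_sup.mp hsξ
  have hξ0 : ξ = 0 := by
    refine hpair2 ξ hξ fun n' hn' => ?_
    have h := hperp n' (Submodule.mem_sup_right hn')
    rw [hB, map_add, map_add, hLS n' hn' s hs, hLL n' hn' n hn] at h
    linarith
  have hn0 : n = 0 := by
    refine hpair1 n hn fun ξ' hξ' => ?_
    have h := hperp ξ' (Submodule.mem_sup_left (Submodule.mem_sup_right hξ'))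
    rw [hB, map_add, map_add, hRad hξ' s (Submodule.mem_sup_left hs),
      hRad hξ' ξ (Submodule.mem_sup_right hξ)] at h
    rw [hB]
    linarith
  subst hξ0 hn0
  rw [add_zero, add_zero] at hperp ⊢
  have hsS : s ∈ S ⊓ perpBilin B S :=
    ⟨hs, perpBilin_anti (le_sup_left.trans le_sup_left) hperp⟩
  rwa [hSnd] at hsS

end Orthogonal

theorem map_map_eq_self_of_sq_eq_neg {V : Type*} [AddCommGroup V] [Module ℝ V]
    {J : V →ₗ[ℝ] V} (hJ : ∀ x, J (J x) = -x) (U : Submodule ℝ V) :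
    (U.map J).map J = U := by
  rw [← Submodule.map_comp, show J ∘ₗ J = -LinearMap.id from LinearMap.ext hJ,
    Submodule.map_neg, Submodule.map_id]

theorem map_eq_self_of_sq_eq_neg {V : Type*} [AddCommGroup V] [Module ℝ V]
    {J : V →ₗ[ℝ] V} (hJ : ∀ x, J (J x) = -x) {U : Submodule ℝ V} (h : U.map J ≤ U) :
    U.map J = U :=
  le_antisymm h <| (map_map_eq_self_of_sq_eq_neg hJ U).symm.le.trans (Submodule.map_mono h)

theorem norden_comp_symm {V : Type*} [AddCommGroup V] [Module ℝ V]
    {J : V →ₗ[ℝ] V} (hJ : ∀ x, J (J x) = -x) {g : V →ₗ[ℝ] V →ₗ[ℝ] ℝ}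
    (hsymm : ∀ x y, g x y = g y x) (hN : ∀ x y, g (J x) (J y) = -g x y) (x y : V) :
    (g ∘ₗ J) x y = (g ∘ₗ J) y x := by
  have h := hN y (J x)
  rw [hJ, map_neg, neg_inj] at h
  simp only [LinearMap.comp_apply]
  rw [h, hsymm]

theorem radical_transversal_screen_transversal_holomorphic_general
    (V : Type*) [AddCommGroup V] [Module ℝ V]
    (J : V →ₗ[ℝ] V) (hJ : ∀ x, J (J x) = -x)
    (g : V →ₗ[ℝ] V →ₗ[ℝ] ℝ)
    (hsymm : ∀ x y, g x y = g y x)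
    (hN : ∀ x y, g (J x) (J y) = -g x y)
    (W S Rad L S' : Submodule ℝ V)
    (hspan : S ⊔ Rad ⊔ L ⊔ S' = ⊤)
    (hW : W = S ⊔ Rad)
    (hRad : Rad = W ⊓ perpBilin (g ∘ₗ J) W)
    (hSnd : S ⊓ perpBilin (g ∘ₗ J) S = ⊥)
    (hS'perp : S' ≤ perpBilin (g ∘ₗ J) W)
    (hLL : ∀ x ∈ L, ∀ y ∈ L, g (J x) y = 0)
    (hLS : ∀ x ∈ L, ∀ y ∈ S, g (J x) y = 0)
    (hLS' : ∀ x ∈ L, ∀ y ∈ S', g (J x) y = 0)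
    (hpair1 : ∀ n ∈ L, (∀ ξ ∈ Rad, g (J n) ξ = 0) → n = 0)
    (hpair2 : ∀ ξ ∈ Rad, (∀ n ∈ L, g (J n) ξ = 0) → ξ = 0)
    (hJRad : Submodule.map J Rad = L)
    (hJS : Submodule.map J S = S) :
    Submodule.map J S' = S' := by
  have hB := norden_comp_symm hJ hsymm hN
  have hJU : (S ⊔ Rad ⊔ L).map J = S ⊔ Rad ⊔ L := by
    rw [Submodule.map_sup, Submodule.map_sup, hJS, hJRad, ← hJRad,
      map_map_eq_self_of_sq_eq_neg hJ, sup_right_comm]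
  have hUnd := sup_inf_perpBilin_eq_bot hB hSnd (hW ▸ hRad ▸ inf_le_right) hLL hLS hpair1 hpair2
  have hS'U : S' ≤ perpBilin (g ∘ₗ J) (S ⊔ Rad ⊔ L) := by
    rw [perpBilin_sup, ← hW]
    exact le_inf hS'perp fun x hx n hn => (hB x n).trans (hLS' n hn x hx)
  refine map_eq_self_of_sq_eq_neg hJ ?_
  rintro _ ⟨x, hx, rfl⟩
  have hJxU : J x ∈ perpBilin (g ∘ₗ J) (S ⊔ Rad ⊔ L) := hJU ▸
    map_perpBilin_le (fun x y h => (hN (J x) y).trans (neg_eq_zero.mpr h)) _ ⟨x, hS'U hx, rfl⟩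
  obtain ⟨u, hu, s', hs', hsum⟩ :=
    Submodule.mem_sup.mp (hspan.symm ▸ Submodule.mem_top (x := J x))
  have hu0 : u ∈ (S ⊔ Rad ⊔ L) ⊓ perpBilin (g ∘ₗ J) (S ⊔ Rad ⊔ L) :=
    ⟨hu, eq_sub_of_add_eq hsum ▸ sub_mem hJxU (hS'U hs')⟩
  rw [hUnd, Submodule.mem_bot] at hu0
  rwa [← hsum, hu0, zero_add]

/-- **Proposition 3.1, pointwise form.** Let `(W, S, Rad, L, S')` be a
Radical transversal datum with respect to the associated metric `g̃ = g ∘ J`: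
`V = S ⊕ Rad ⊕ L ⊕ S'`, `W = S ⊕ Rad`, `Rad = W ∩ W^{⊥g̃} ≠ 0`, `g̃│S` and
`g̃│S'` nondegenerate, `S' ⊆ W^{⊥g̃}`, `g̃` vanishes on `L×L`, `L×S`, `L×S'`, the
pairing between `L` and `Rad` via `g̃` is nondegenerate, `J(Rad) = L`, `J(S) = S`.
Then the screen transversal space `S'` is `J`-invariant: `J(S') = S'`. -/
theorem radical_transversal_screen_transversal_holomorphic
    (V : Type*) [AddCommGroup V] [Module ℝ V] [FiniteDimensional ℝ V]
    (J : V →ₗ[ℝ] V) (hJ : ∀ x, J (J x) = -x)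
    (g : V →ₗ[ℝ] V →ₗ[ℝ] ℝ)
    (hsymm : ∀ x y, g x y = g y x)
    (hnd : ∀ x, (∀ y, g x y = 0) → x = 0)
    (hN : ∀ x y, g (J x) (J y) = -g x y)
    (W S Rad L S' : Submodule ℝ V)
    (hind1 : S ⊓ Rad = ⊥)
    (hind2 : (S ⊔ Rad) ⊓ L = ⊥)
    (hind3 : (S ⊔ Rad ⊔ L) ⊓ S' = ⊥)
    (hspan : S ⊔ Rad ⊔ L ⊔ S' = ⊤)
    (hW : W = S ⊔ Rad)
    (hRad : Rad = W ⊓ perpBilin (g ∘ₗ J) W) (hRadne : Rad ≠ ⊥)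
    (hSnd : S ⊓ perpBilin (g ∘ₗ J) S = ⊥)
    (hS'perp : S' ≤ perpBilin (g ∘ₗ J) W)
    (hS'nd : S' ⊓ perpBilin (g ∘ₗ J) S' = ⊥)
    (hLL : ∀ x ∈ L, ∀ y ∈ L, g (J x) y = 0)
    (hLS : ∀ x ∈ L, ∀ y ∈ S, g (J x) y = 0)
    (hLS' : ∀ x ∈ L, ∀ y ∈ S', g (J x) y = 0)
    (hpair1 : ∀ n ∈ L, (∀ ξ ∈ Rad, g (J n) ξ = 0) → n = 0)
    (hpair2 : ∀ ξ ∈ Rad, (∀ n ∈ L, g (J n) ξ = 0) → ξ = 0)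
    (hJRad : Submodule.map J Rad = L)
    (hJS : Submodule.map J S = S) :
    Submodule.map J S' = S' :=
  radical_transversal_screen_transversal_holomorphic_general V J hJ g hsymm hN W S Rad L S' hspan hW
    hRad hSnd hS'perp hLL hLS hLS' hpair1 hpair2 hJRad hJS
end

section
/- Let W ⊆ V be a subspace such that the restriction of g to W is nondegenerate and J(W) ⊆ W^{⊥g} (W is totally real with respect to g). Then: W ∩ J(W) = 0; the restriction of g to J(W) is nondegenerate; V = W ⊕ J(W) ⊕ (W + J(W))^{⊥g}, with the three summands mutually g-orthogonal; and the subspace (W + J(W))^{⊥g} is J-invariant. -/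
/-!
Since `J` is an anti-isometry of `g` with `J² = -1`, it carries `W^{⊥g}` onto `(JW)^{⊥g}`; hence
`JW` inherits nondegeneracy from `W`, and `(W + JW)^{⊥g}` is `J`-invariant because `W + JW` is.
The sum `W + JW` of two mutually orthogonal nondegenerate subspaces is nondegenerate, so in finite
dimension it is complemented by its orthogonal space.
-/

section Perp

variable {V : Type*} [AddCommGroup V] [Module ℝ V] (g : V →ₗ[ℝ] V →ₗ[ℝ] ℝ)

@[simp]
lemma mem_perpBilin {W : Submodule ℝ V} {v : V} : v ∈ perpBilin g W ↔ ∀ w ∈ W, g v w = 0 :=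
  Iff.rfl

lemma perpBilin_eq_orthogonal (hsymm : ∀ x y, g x y = g y x) (W : Submodule ℝ V) :
    perpBilin g W = LinearMap.BilinForm.orthogonal g W := by
  ext v
  exact forall₂_congr fun w _ => by rw [hsymm]

lemma perpBilin_sup_s13 (W W' : Submodule ℝ V) :
    perpBilin g (W ⊔ W') = perpBilin g W ⊓ perpBilin g W' := by
  ext v
  simp only [mem_perpBilin, Submodule.mem_inf, Submodule.mem_sup]
  constructor
  · intro hv
    exact ⟨fun w hw => hv w ⟨w, hw, 0, W'.zero_mem, add_zero w⟩,
      fun w hw => hv w ⟨0, W.zero_mem, w, hw, zero_add w⟩⟩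
  · rintro ⟨hW, hW'⟩ _ ⟨w, hw, w', hw', rfl⟩
    rw [map_add, hW w hw, hW' w' hw', add_zero]

lemma apply_eq_zero_of_mem_perpBilin (hsymm : ∀ x y, g x y = g y x) {W : Submodule ℝ V}
    {x y : V} (hx : x ∈ W) (hy : y ∈ perpBilin g W) : g x y = 0 :=
  (hsymm x y).trans (hy x hx)

lemma sup_inf_perpBilin_eq_bot_s13 {W W' : Submodule ℝ V} (hW : W ⊓ perpBilin g W = ⊥)
    (hW' : W' ⊓ perpBilin g W' = ⊥) (horth : W' ≤ perpBilin g W) :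
    (W ⊔ W') ⊓ perpBilin g (W ⊔ W') = ⊥ := by
  rw [eq_bot_iff]
  rintro x ⟨hx, hx_perp⟩
  obtain ⟨hxW, hxW'⟩ := perpBilin_sup_s13 g W W' ▸ hx_perp
  obtain ⟨a, ha, b, hb, rfl⟩ := Submodule.mem_sup.mp hx
  have ha_perp : a ∈ perpBilin g W := by
    simpa using sub_mem hxW (horth hb)
  obtain rfl : a = 0 := (Submodule.mem_bot ℝ).mp (hW ▸ ⟨ha, ha_perp⟩)
  rw [zero_add] at hxW' ⊢
  exact hW' ▸ ⟨hb, hxW'⟩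

lemma sup_perpBilin_eq_top [FiniteDimensional ℝ V] (hsymm : ∀ x y, g x y = g y x)
    {W : Submodule ℝ V} (hW : W ⊓ perpBilin g W = ⊥) : W ⊔ perpBilin g W = ⊤ := by
  have hrefl : LinearMap.BilinForm.IsRefl g := fun x y hxy => (hsymm y x).trans hxy
  rw [perpBilin_eq_orthogonal g hsymm] at hW ⊢
  exact ((LinearMap.BilinForm.isCompl_orthogonal_iff_disjoint hrefl).mpr
    (disjoint_iff.mpr hW)).sup_eq_top

end Perp

section AntiIsometry

variable {V : Type*} [AddCommGroup V] [Module ℝ V] {g : V →ₗ[ℝ] V →ₗ[ℝ] ℝ} {J : V →ₗ[ℝ] V}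

lemma injective_of_apply_apply_eq_neg (hJ : ∀ x, J (J x) = -x) : Function.Injective J :=
  fun x y hxy => neg_injective (by rw [← hJ x, ← hJ y, hxy])

lemma map_map_of_apply_apply_eq_neg (hJ : ∀ x, J (J x) = -x) (W : Submodule ℝ V) :
    Submodule.map J (Submodule.map J W) = W := by
  have hJJ : J ∘ₗ J = -LinearMap.id := LinearMap.ext hJ
  rw [← Submodule.map_comp, hJJ, Submodule.map_neg, Submodule.map_id]

lemma perpBilin_map (hJ : ∀ x, J (J x) = -x) (hN : ∀ x y, g (J x) (J y) = -g x y)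
    (W : Submodule ℝ V) : perpBilin g (Submodule.map J W) = Submodule.map J (perpBilin g W) := by
  ext x
  have hx : x = J (-J x) := by rw [map_neg, hJ, neg_neg]
  constructor
  · intro hperp
    refine ⟨-J x, fun w hw => ?_, hx.symm⟩
    have := hperp (J w) ⟨w, hw, rfl⟩
    rwa [hx, hN, neg_eq_zero] at this
  · rintro ⟨y, hy, rfl⟩ _ ⟨w, hw, rfl⟩
    rw [hN, hy w hw, neg_zero]

end AntiIsometry

theorem totally_real_decomposition_general
    (V : Type*) [AddCommGroup V] [Module ℝ V] [FiniteDimensional ℝ V]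
    (J : V →ₗ[ℝ] V) (hJ : ∀ x, J (J x) = -x)
    (g : V →ₗ[ℝ] V →ₗ[ℝ] ℝ)
    (hsymm : ∀ x y, g x y = g y x)
    (hN : ∀ x y, g (J x) (J y) = -g x y)
    (W : Submodule ℝ V)
    (hWnd : W ⊓ perpBilin g W = ⊥)
    (hTR : Submodule.map J W ≤ perpBilin g W) :
    W ⊓ Submodule.map J W = ⊥ ∧
    Submodule.map J W ⊓ perpBilin g (Submodule.map J W) = ⊥ ∧
    (W ⊔ Submodule.map J W) ⊓ perpBilin g (W ⊔ Submodule.map J W) = ⊥ ∧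
    W ⊔ Submodule.map J W ⊔ perpBilin g (W ⊔ Submodule.map J W) = ⊤ ∧
    (∀ x ∈ W, ∀ y ∈ Submodule.map J W, g x y = 0) ∧
    (∀ x ∈ W, ∀ y ∈ perpBilin g (W ⊔ Submodule.map J W), g x y = 0) ∧
    (∀ x ∈ Submodule.map J W, ∀ y ∈ perpBilin g (W ⊔ Submodule.map J W),
      g x y = 0) ∧
    Submodule.map J (perpBilin g (W ⊔ Submodule.map J W))
      = perpBilin g (W ⊔ Submodule.map J W) := by
  have hJW : Submodule.map J W ⊓ perpBilin g (Submodule.map J W) = ⊥ := by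
    rw [perpBilin_map hJ hN, ← Submodule.map_inf _ (injective_of_apply_apply_eq_neg hJ), hWnd,
      Submodule.map_bot]
  have hU : (W ⊔ Submodule.map J W) ⊓ perpBilin g (W ⊔ Submodule.map J W) = ⊥ :=
    sup_inf_perpBilin_eq_bot_s13 g hWnd hJW hTR
  have hU_inv : Submodule.map J (W ⊔ Submodule.map J W) = W ⊔ Submodule.map J W := by
    rw [Submodule.map_sup, map_map_of_apply_apply_eq_neg hJ, sup_comm]
  refine ⟨(disjoint_iff.mpr hWnd).mono_right hTR |>.eq_bot, hJW, hU,
    sup_perpBilin_eq_top g hsymm hU, fun x hx y hy => ?_, fun x hx y hy => ?_,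
    fun x hx y hy => ?_, by rw [← perpBilin_map hJ hN, hU_inv]⟩
  · exact apply_eq_zero_of_mem_perpBilin g hsymm hx (hTR hy)
  · exact apply_eq_zero_of_mem_perpBilin g hsymm (Submodule.mem_sup_left hx) hy
  · exact apply_eq_zero_of_mem_perpBilin g hsymm (Submodule.mem_sup_right hx) hy

/-- Let `W` be a totally real subspace of the Norden vector space
`(V, J, g)`: `g│W` nondegenerate and `J(W) ⊆ W^{⊥g}`.  Then `W ∩ J(W) = 0`, the
restriction of `g` to `J(W)` is nondegenerate,
`V = W ⊕ J(W) ⊕ (W + J(W))^{⊥g}` with mutually `g`-orthogonal summands, and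
`(W + J(W))^{⊥g}` is `J`-invariant. -/
theorem totally_real_decomposition
    (V : Type*) [AddCommGroup V] [Module ℝ V] [FiniteDimensional ℝ V]
    (J : V →ₗ[ℝ] V) (hJ : ∀ x, J (J x) = -x)
    (g : V →ₗ[ℝ] V →ₗ[ℝ] ℝ)
    (hsymm : ∀ x y, g x y = g y x)
    (hnd : ∀ x, (∀ y, g x y = 0) → x = 0)
    (hN : ∀ x y, g (J x) (J y) = -g x y)
    (W : Submodule ℝ V)
    (hWnd : W ⊓ perpBilin g W = ⊥)
    (hTR : Submodule.map J W ≤ perpBilin g W) :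
    W ⊓ Submodule.map J W = ⊥ ∧
    Submodule.map J W ⊓ perpBilin g (Submodule.map J W) = ⊥ ∧
    (W ⊔ Submodule.map J W) ⊓ perpBilin g (W ⊔ Submodule.map J W) = ⊥ ∧
    W ⊔ Submodule.map J W ⊔ perpBilin g (W ⊔ Submodule.map J W) = ⊤ ∧
    (∀ x ∈ W, ∀ y ∈ Submodule.map J W, g x y = 0) ∧
    (∀ x ∈ W, ∀ y ∈ perpBilin g (W ⊔ Submodule.map J W), g x y = 0) ∧
    (∀ x ∈ Submodule.map J W, ∀ y ∈ perpBilin g (W ⊔ Submodule.map J W),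
      g x y = 0) ∧
    Submodule.map J (perpBilin g (W ⊔ Submodule.map J W))
      = perpBilin g (W ⊔ Submodule.map J W) :=
  totally_real_decomposition_general V J hJ g hsymm hN W hWnd hTR
end
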